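/- (L^1 time-Lipschitz estimate for solutions) Suppose (H1), (H2), (H3) hold with κ = 1, let L > 0, let u be a solution of the coagulation equation with ‖u(·,t)‖_Y ≤ 2L for all t ≥ 0, and let C = 1 if 0 ≤ λ ≤ 1 and C = 2^{2λ−2} if λ > 1. Then for all t, t' ≥ 0: ∫_0^∞ |u(x,t') − u(x,t)| dx ≤ 18 C L² |t' − t|. In particular t ↦ u(·,t) is Lipschitz continuous from [0,∞) into L^1((0,∞)). -/

import Mathlib

open MeasureTheory Set Filter

/-- The weighted norm `‖u‖_Y = ∫_0^∞ (x + x⁻¹)|u(x)| dx`. -/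
noncomputable def Ynorm (u : ℝ → ℝ) : ℝ :=
  ∫ x in Ioi (0:ℝ), (x + x⁻¹) * |u x|

/-- `u ∈ Y⁺`: `u ∈ L¹((0,∞))`, `‖u‖_Y < ∞` and `u ≥ 0` a.e. on `(0,∞)`. -/
def InYplus (u : ℝ → ℝ) : Prop :=
  IntegrableOn u (Ioi (0:ℝ)) volume ∧
  IntegrableOn (fun x => (x + x⁻¹) * |u x|) (Ioi (0:ℝ)) volume ∧
  (∀ᵐ x ∂(volume.restrict (Ioi (0:ℝ))), 0 ≤ u x)

/-- Hypotheses (H1), (H2), (H3) on the coagulation kernel `K`. -/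
structure KernelHyp (K : ℝ → ℝ → ℝ) (κ σ lam : ℝ) : Prop where
  cont : ContinuousOn (Function.uncurry K) (Ioi (0:ℝ) ×ˢ Ioi (0:ℝ))
  nonneg : ∀ ⦃x y : ℝ⦄, 0 < x → 0 < y → 0 ≤ K x y
  symm : ∀ ⦃x y : ℝ⦄, 0 < x → 0 < y → K x y = K y x
  kpos : 0 < κ
  sigma_mem : σ ∈ Icc (0:ℝ) (1/2)
  lam_sub : lam - σ ∈ Ico (0:ℝ) 1
  bound : ∀ ⦃x y : ℝ⦄, 0 < x → 0 < y → K x y ≤ κ * (1 + x + y) ^ lam * (x * y) ^ (-σ)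

/-- The truncated kernel `K_n`. -/
noncomputable def Ktrunc (K : ℝ → ℝ → ℝ) (n : ℕ) (x y : ℝ) : ℝ :=
  if x + y ≤ (n:ℝ) ∧ 1/(n:ℝ) ≤ x ∧ 1/(n:ℝ) ≤ y then K x y else 0

/-- The truncated initial datum `u_0^n`. -/
noncomputable def truncInit (u0 : ℝ → ℝ) (n : ℕ) (x : ℝ) : ℝ :=
  if x ≤ (n:ℝ) then u0 x else 0

/-- `u` is a solution of the truncated problem on `[0,n]` with initial datum `u_0^n`:
for all `t ≥ 0`, `u(·,t) ∈ L¹((0,n))` and for a.e. `x ∈ (0,n)` the truncated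
integral equation holds. -/
def IsTruncSol (K : ℝ → ℝ → ℝ) (u0 : ℝ → ℝ) (n : ℕ) (u : ℝ → ℝ → ℝ) : Prop :=
  (∀ t : ℝ, 0 ≤ t → IntegrableOn (fun x => u x t) (Ioo 0 (n:ℝ)) volume) ∧
  (∀ t : ℝ, 0 ≤ t → ∀ᵐ x ∂(volume.restrict (Ioo 0 (n:ℝ))),
    u x t = truncInit u0 n x + ∫ τ in (0:ℝ)..t,
      ((1/2) * ∫ y in (0:ℝ)..x, Ktrunc K n (x - y) y * u (x - y) τ * u y τ)
      - ∫ y in (0:ℝ)..((n:ℝ) - x), Ktrunc K n x y * u x τ * u y τ)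

/-- Nonnegativity of a truncated solution. -/
def TruncNonneg (n : ℕ) (u : ℝ → ℝ → ℝ) : Prop :=
  ∀ t : ℝ, 0 ≤ t → ∀ᵐ x ∂(volume.restrict (Ioo 0 (n:ℝ))), 0 ≤ u x t

/-- `u` is the zero extension outside `(0,n]`. -/
def ZeroExt (n : ℕ) (u : ℝ → ℝ → ℝ) : Prop :=
  ∀ x t : ℝ, ((n:ℝ) < x ∨ x ≤ 0) → u x t = 0

/-- `u` is a (weak-in-time) solution of the coagulation equation on `[0,∞)`
with initial datum `u0`: `u(·,t) ∈ Y⁺` for all `t ≥ 0`, and for a.e. `x > 0`: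
nonnegativity, continuity in `t`, finiteness of `∫_0^t∫_0^∞ K(x,y)u(y,τ) dy dτ`,
and the integral form of the equation. -/
def IsSol (K : ℝ → ℝ → ℝ) (u0 : ℝ → ℝ) (u : ℝ → ℝ → ℝ) : Prop :=
  (∀ t : ℝ, 0 ≤ t → InYplus (fun x => u x t)) ∧
  (∀ᵐ x ∂(volume.restrict (Ioi (0:ℝ))),
    (∀ t : ℝ, 0 ≤ t → 0 ≤ u x t) ∧
    ContinuousOn (fun t => u x t) (Ici (0:ℝ)) ∧
    (∀ t : ℝ, 0 ≤ t →
      IntegrableOn (fun p : ℝ × ℝ => K x p.2 * u p.2 p.1)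
        (Ioc (0:ℝ) t ×ˢ Ioi (0:ℝ)) volume) ∧
    (∀ t : ℝ, 0 ≤ t →
      u x t = u0 x + ∫ τ in (0:ℝ)..t,
        ((1/2) * ∫ y in (0:ℝ)..x, K (x - y) y * u (x - y) τ * u y τ)
        - ∫ y in Ioi (0:ℝ), K x y * u x τ * u y τ))

/-!
With `w x = x + x⁻¹`, hypothesis (H3) gives `K x y ≤ 3 C w(x) w(y)`, because
`(1 + x + y)^λ ≤ C (1 + x^λ + y^λ)` and every power `x^a` with `|a| ≤ 1` is at most `w x`.
Hence the gain term of the right-hand side has `L¹` norm at most `½ · 3C ‖u‖_Y²` (Tonelli turns the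
convolution integral into a product) and the loss term at most `3C ‖u‖_Y²`, so at every time the
right-hand side has `L¹` norm at most `18 C L²`; integrating the equation between `t` and `t'`
gives the estimate. Tonelli needs `u` jointly measurable, which a version of it is, being
measurable in `x` and continuous in `t`.
-/

open scoped ENNReal

lemma rpow_le_add_inv {x a : ℝ} (hx : 0 < x) (ha : a ∈ Icc (-1 : ℝ) 1) :
    x ^ a ≤ x + x⁻¹ := by
  rcases le_or_gt 1 x with hx1 | hx1
  · have := Real.rpow_le_rpow_of_exponent_le hx1 ha.2
    rw [Real.rpow_one] at this
    linarith [inv_pos.2 hx]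
  · have := Real.rpow_le_rpow_of_exponent_ge hx hx1.le ha.1
    rw [Real.rpow_neg_one] at this
    linarith

lemma Real.rpow_add_le_mul_rpow_add_rpow {a b p : ℝ} (ha : 0 ≤ a) (hb : 0 ≤ b)
    (hp : 1 ≤ p) : (a + b) ^ p ≤ 2 ^ (p - 1) * (a ^ p + b ^ p) := by
  lift a to NNReal using ha
  lift b to NNReal using hb
  exact_mod_cast NNReal.rpow_add_le_mul_rpow_add_rpow a b hp

noncomputable def powSumConst (lam : ℝ) : ℝ := if lam ≤ 1 then 1 else 2 ^ (2 * lam - 2)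

lemma powSumConst_pos (lam : ℝ) : 0 < powSumConst lam := by
  unfold powSumConst; split_ifs <;> positivity

lemma one_add_add_rpow_le {x y lam : ℝ} (hx : 0 ≤ x) (hy : 0 ≤ y) (hlam : 0 ≤ lam) :
    (1 + x + y) ^ lam ≤ powSumConst lam * (1 + x ^ lam + y ^ lam) := by
  unfold powSumConst
  split_ifs with hlam1
  · calc (1 + x + y) ^ lam ≤ (1 + x) ^ lam + y ^ lam :=
          Real.rpow_add_le_add_rpow (by positivity) hy hlam hlam1
      _ ≤ 1 ^ lam + x ^ lam + y ^ lam := by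
          gcongr; exact Real.rpow_add_le_add_rpow zero_le_one hx hlam hlam1
      _ = 1 * (1 + x ^ lam + y ^ lam) := by rw [Real.one_rpow, one_mul]
  · rw [not_le] at hlam1
    have hsq : (2 : ℝ) ^ (2 * lam - 2) = 2 ^ (lam - 1) * 2 ^ (lam - 1) := by
      rw [← Real.rpow_add two_pos]; ring_nf
    have hle : (2 : ℝ) ^ (lam - 1) ≤ 2 ^ (2 * lam - 2) :=
      Real.rpow_le_rpow_of_exponent_le one_le_two (by linarith)
    calc (1 + x + y) ^ lam ≤ 2 ^ (lam - 1) * ((1 + x) ^ lam + y ^ lam) :=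
          Real.rpow_add_le_mul_rpow_add_rpow (by positivity) hy hlam1.le
      _ ≤ 2 ^ (lam - 1) * (2 ^ (lam - 1) * (1 ^ lam + x ^ lam) + y ^ lam) := by
          gcongr; exact Real.rpow_add_le_mul_rpow_add_rpow zero_le_one hx hlam1.le
      _ = 2 ^ (2 * lam - 2) * (1 + x ^ lam) + 2 ^ (lam - 1) * y ^ lam := by
          rw [Real.one_rpow, hsq]; ring
      _ ≤ 2 ^ (2 * lam - 2) * (1 + x ^ lam) + 2 ^ (2 * lam - 2) * y ^ lam := by
          gcongr
      _ = 2 ^ (2 * lam - 2) * (1 + x ^ lam + y ^ lam) := by ring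

lemma KernelHyp.le_mul_add_inv {K : ℝ → ℝ → ℝ} {κ σ lam : ℝ} (hK : KernelHyp K κ σ lam)
    {x y : ℝ} (hx : 0 < x) (hy : 0 < y) :
    K x y ≤ 3 * κ * powSumConst lam * ((x + x⁻¹) * (y + y⁻¹)) := by
  obtain ⟨hσ0, hσ⟩ := hK.sigma_mem
  obtain ⟨hlσ0, hlσ1⟩ := hK.lam_sub
  have hw : ∀ {z : ℝ}, 0 < z → z ^ (-σ) ≤ z + z⁻¹ ∧ z ^ lam * z ^ (-σ) ≤ z + z⁻¹ := by
    intro z hz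
    rw [← Real.rpow_add hz]
    exact ⟨rpow_le_add_inv hz ⟨by linarith, by linarith⟩,
      rpow_le_add_inv hz ⟨by linarith, by linarith⟩⟩
  obtain ⟨hx1, hx2⟩ := hw hx
  obtain ⟨hy1, hy2⟩ := hw hy
  have hC := powSumConst_pos lam
  have hκ := hK.kpos
  calc K x y ≤ κ * (1 + x + y) ^ lam * (x ^ (-σ) * y ^ (-σ)) := by
        rw [← Real.mul_rpow hx.le hy.le]; exact hK.bound hx hy
    _ ≤ κ * (powSumConst lam * (1 + x ^ lam + y ^ lam)) * (x ^ (-σ) * y ^ (-σ)) := by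
        gcongr; exact one_add_add_rpow_le hx.le hy.le (by linarith)
    _ = κ * powSumConst lam * (x ^ (-σ) * y ^ (-σ) + (x ^ lam * x ^ (-σ)) * y ^ (-σ)
          + x ^ (-σ) * (y ^ lam * y ^ (-σ))) := by ring
    _ ≤ κ * powSumConst lam * ((x + x⁻¹) * (y + y⁻¹) + (x + x⁻¹) * (y + y⁻¹)
          + (x + x⁻¹) * (y + y⁻¹)) := by gcongr
    _ = 3 * κ * powSumConst lam * ((x + x⁻¹) * (y + y⁻¹)) := by ring

lemma exists_measurable_uncurry_ae_eq {α : Type*} [MeasurableSpace α] {μ : Measure α}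
    {u : α → ℝ → ℝ} (hmeas : ∀ t, 0 ≤ t → AEStronglyMeasurable (fun x => u x t) μ)
    (hcont : ∀ᵐ x ∂μ, ContinuousOn (u x) (Ici 0)) :
    ∃ v : α → ℝ → ℝ, Measurable (Function.uncurry v) ∧ ∀ᵐ x ∂μ, ∀ t, 0 ≤ t → v x t = u x t := by
  let W : ℚ → α → ℝ := fun q => (hmeas (max q 0) (le_max_right _ _)).mk
  have hgood : ∀ᵐ x ∂μ, ContinuousOn (u x) (Ici 0) ∧ ∀ q : ℚ, u x (max q 0) = W q x :=
    hcont.and (ae_all_iff.2 fun q => (hmeas _ (le_max_right _ _)).ae_eq_mk)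
  obtain ⟨G, hG_ae, hG_meas, hG⟩ := hgood.exists_measurable_mem
  let v : α → ℝ → ℝ := fun x t => G.indicator (fun x => u x (max t 0)) x
  have hv_cont : ∀ x, Continuous (v x) := by
    intro x
    by_cases hx : x ∈ G
    · simp only [v, indicator_of_mem hx]
      exact (hG x hx).1.comp_continuous (continuous_id.max continuous_const)
        fun t => le_max_right t 0
    · simp only [v, indicator_of_notMem hx]
      exact continuous_const
  have hv_meas : ∀ t, StronglyMeasurable fun x => v x t := by
    intro t
    obtain ⟨q, -, -, hq⟩ := Real.exists_seq_rat_strictAnti_tendsto t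
    refine stronglyMeasurable_of_tendsto atTop
      (fun n => (hmeas _ (le_max_right (q n : ℝ) 0)).stronglyMeasurable_mk.indicator hG_meas)
      (tendsto_pi_nhds.2 ?_)
    intro x
    by_cases hx : x ∈ G
    · have h := ((hv_cont x).tendsto t).comp hq
      simp only [v, Function.comp_def, indicator_of_mem hx, (hG x hx).2] at h ⊢
      exact h
    · simp only [v, indicator_of_notMem hx]
      exact tendsto_const_nhds
  refine ⟨v, ?_, ?_⟩
  · exact (stronglyMeasurable_uncurry_of_continuous_of_stronglyMeasurable
      (u := fun t x => v x t) hv_cont hv_meas).measurable.comp measurable_swap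
  · filter_upwards [hG_ae] with x hx t ht
    simp only [v, indicator_of_mem hx, max_eq_left ht]

lemma lintegral_Ioi_lintegral_Ioo_sub_mul_le {f g : ℝ → ℝ≥0∞} (hf : Measurable f)
    (hg : Measurable g) :
    ∫⁻ x in Ioi 0, ∫⁻ y in Ioo 0 x, f (x - y) * g y ≤
      (∫⁻ x in Ioi 0, f x) * ∫⁻ y in Ioi 0, g y := by
  let F := (Ioi (0 : ℝ)).indicator f
  have hF : Measurable F := hf.indicator measurableSet_Ioi
  calc ∫⁻ x in Ioi 0, ∫⁻ y in Ioo 0 x, f (x - y) * g y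
      ≤ ∫⁻ x, ∫⁻ y in Ioi 0, F (x - y) * g y := by
        refine (setLIntegral_le_lintegral _ _).trans' (lintegral_mono fun x => ?_)
        calc ∫⁻ y in Ioo 0 x, f (x - y) * g y = ∫⁻ y in Ioo 0 x, F (x - y) * g y :=
              setLIntegral_congr_fun measurableSet_Ioo fun y hy => by
                simp only [F, indicator_of_mem (show x - y ∈ Ioi 0 from sub_pos.2 hy.2)]
          _ ≤ ∫⁻ y in Ioi 0, F (x - y) * g y := lintegral_mono_set Ioo_subset_Ioi_self
    _ = ∫⁻ y in Ioi 0, ∫⁻ x, F (x - y) * g y :=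
        lintegral_lintegral_swap ((hF.comp (measurable_fst.sub measurable_snd)).mul
          (hg.comp measurable_snd)).aemeasurable
    _ = ∫⁻ y in Ioi 0, (∫⁻ x in Ioi 0, f x) * g y := by
        refine lintegral_congr fun y => ?_
        have hFy : Measurable fun x => F (x - y) := hF.comp (measurable_sub_const y)
        rw [lintegral_mul_const _ hFy,
          lintegral_sub_right_eq_self F y, lintegral_indicator measurableSet_Ioi]
    _ = (∫⁻ x in Ioi 0, f x) * ∫⁻ y in Ioi 0, g y := lintegral_const_mul _ hg

noncomputable def ynormDensity (f : ℝ → ℝ) (y : ℝ) : ℝ≥0∞ := ‖(y + y⁻¹) * f y‖ₑ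

lemma measurable_ynormDensity {f : ℝ → ℝ} (hf : Measurable f) : Measurable (ynormDensity f) :=
  ((measurable_id.add measurable_inv).mul hf).enorm

noncomputable def coagulationRate (k : ℝ → ℝ → ℝ) (f : ℝ → ℝ) (x : ℝ) : ℝ :=
  (1 / 2) * (∫ y in Ioo 0 x, k (x - y) y * f (x - y) * f y) - ∫ y in Ioi 0, k x y * f x * f y

section RateBounds

variable {k : ℝ → ℝ → ℝ} {A : ℝ} {f : ℝ → ℝ}

lemma enorm_mul_mul_le_ynormDensity
    (hk : ∀ a b, 0 < a → 0 < b → |k a b| ≤ A * ((a + a⁻¹) * (b + b⁻¹)))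
    {a b : ℝ} (ha : 0 < a) (hb : 0 < b) :
    ‖k a b * f a * f b‖ₑ ≤
      ENNReal.ofReal A * (ynormDensity f a * ynormDensity f b) := by
  simp_rw [ynormDensity, ← ofReal_norm, ← ENNReal.ofReal_mul (norm_nonneg _),
    ← ENNReal.ofReal_mul' (by positivity : 0 ≤ ‖(a + a⁻¹) * f a‖ * ‖(b + b⁻¹) * f b‖)]
  refine ENNReal.ofReal_le_ofReal ?_
  have hwa : 0 < a + a⁻¹ := by positivity
  have hwb : 0 < b + b⁻¹ := by positivity
  simp only [norm_mul, Real.norm_eq_abs, abs_of_pos hwa, abs_of_pos hwb]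
  calc |k a b| * |f a| * |f b| ≤ A * ((a + a⁻¹) * (b + b⁻¹)) * |f a| * |f b| := by
        gcongr; exact hk a b ha hb
    _ = A * ((a + a⁻¹) * |f a| * ((b + b⁻¹) * |f b|)) := by ring

lemma enorm_coagulationRate_le
    (hk : ∀ a b, 0 < a → 0 < b → |k a b| ≤ A * ((a + a⁻¹) * (b + b⁻¹))) {x : ℝ} (hx : 0 < x) :
    ‖coagulationRate k f x‖ₑ ≤
      2⁻¹ * (ENNReal.ofReal A * ∫⁻ y in Ioo 0 x, ynormDensity f (x - y) * ynormDensity f y) +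
        ENNReal.ofReal A * ynormDensity f x * ∫⁻ y in Ioi 0, ynormDensity f y := by
  have hhalf : ‖(1 / 2 : ℝ)‖ₑ = 2⁻¹ := by
    rw [← ofReal_norm, Real.norm_of_nonneg (by norm_num), one_div,
      ENNReal.ofReal_inv_of_pos two_pos, ENNReal.ofReal_ofNat]
  calc ‖coagulationRate k f x‖ₑ
      ≤ 2⁻¹ * (∫⁻ y in Ioo 0 x, ‖k (x - y) y * f (x - y) * f y‖ₑ) +
          ∫⁻ y in Ioi 0, ‖k x y * f x * f y‖ₑ := by
        refine enorm_sub_le.trans ?_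
        rw [enorm_mul, hhalf]
        exact add_le_add (mul_le_mul_right (enorm_integral_le_lintegral_enorm _) _)
          (enorm_integral_le_lintegral_enorm _)
    _ ≤ 2⁻¹ * (∫⁻ y in Ioo 0 x, ENNReal.ofReal A * (ynormDensity f (x - y) * ynormDensity f y)) +
          ∫⁻ y in Ioi 0, ENNReal.ofReal A * (ynormDensity f x * ynormDensity f y) := by
        refine add_le_add (mul_le_mul_right ?_ _) ?_
        · exact setLIntegral_mono' measurableSet_Ioo fun y hy =>
            enorm_mul_mul_le_ynormDensity hk (sub_pos.2 hy.2) hy.1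
        · exact setLIntegral_mono' measurableSet_Ioi fun y (hy : 0 < y) =>
            enorm_mul_mul_le_ynormDensity hk hx hy
    _ = _ := by
        simp only [lintegral_const_mul' _ _ ENNReal.ofReal_ne_top]
        rw [lintegral_const_mul' (ynormDensity f x) _ enorm_ne_top]
        ring

lemma lintegral_enorm_coagulationRate_le
    (hk : ∀ a b, 0 < a → 0 < b → |k a b| ≤ A * ((a + a⁻¹) * (b + b⁻¹))) (hf : Measurable f) :
    ∫⁻ x in Ioi 0, ‖coagulationRate k f x‖ₑ ≤
      (2⁻¹ + 1) * ENNReal.ofReal A * (∫⁻ y in Ioi 0, ynormDensity f y) ^ 2 := by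
  have hD := measurable_ynormDensity hf
  set N := ∫⁻ y in Ioi 0, ynormDensity f y
  calc ∫⁻ x in Ioi 0, ‖coagulationRate k f x‖ₑ
      ≤ ∫⁻ x in Ioi 0, (2⁻¹ * (ENNReal.ofReal A *
            ∫⁻ y in Ioo 0 x, ynormDensity f (x - y) * ynormDensity f y) +
          ENNReal.ofReal A * ynormDensity f x * N) :=
        setLIntegral_mono' measurableSet_Ioi fun x hx => enorm_coagulationRate_le hk hx
    _ = 2⁻¹ * (ENNReal.ofReal A *
            ∫⁻ x in Ioi 0, ∫⁻ y in Ioo 0 x, ynormDensity f (x - y) * ynormDensity f y) +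
          ENNReal.ofReal A * N * N := by
        rw [lintegral_add_right _ ((hD.const_mul _).mul_const _),
          lintegral_const_mul' _ _ (by norm_num), lintegral_const_mul' _ _ ENNReal.ofReal_ne_top,
          lintegral_mul_const _ (hD.const_mul _), lintegral_const_mul _ hD]
    _ ≤ 2⁻¹ * (ENNReal.ofReal A * (N * N)) + ENNReal.ofReal A * N * N := by
        gcongr
        exact lintegral_Ioi_lintegral_Ioo_sub_mul_le hD hD
    _ = _ := by ring

end RateBounds

lemma coagulationRate_eq_intervalIntegral (k : ℝ → ℝ → ℝ) (f : ℝ → ℝ) {x : ℝ} (hx : 0 ≤ x) :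
    coagulationRate k f x = (1 / 2) * (∫ y in (0 : ℝ)..x, k (x - y) y * f (x - y) * f y) -
      ∫ y in Ioi 0, k x y * f x * f y := by
  rw [intervalIntegral.integral_of_le hx, integral_Ioc_eq_integral_Ioo, coagulationRate]

lemma coagulationRate_congr {k k' : ℝ → ℝ → ℝ} {f g : ℝ → ℝ}
    (hk : ∀ a b, 0 < a → 0 < b → k a b = k' a b) (hfg : f =ᵐ[volume.restrict (Ioi 0)] g)
    {x : ℝ} (hx : 0 < x) (hfgx : f x = g x) :
    coagulationRate k f x = coagulationRate k' g x := by
  have hpos : ∀ᵐ y, 0 < y → f y = g y := (ae_restrict_iff' measurableSet_Ioi).1 hfg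
  have hsub : ∀ᵐ y, 0 < x - y → f (x - y) = g (x - y) :=
    (Measure.measurePreserving_sub_left volume x).quasiMeasurePreserving.ae hpos
  unfold coagulationRate
  congr 1
  · congr 1
    refine setIntegral_congr_ae measurableSet_Ioo ?_
    filter_upwards [hpos, hsub] with y hy hxy hmem
    rw [hk _ _ (sub_pos.2 hmem.2) hmem.1, hy hmem.1, hxy (sub_pos.2 hmem.2)]
  · refine setIntegral_congr_ae measurableSet_Ioi ?_
    filter_upwards [hpos] with y hy (hmem : 0 < y)
    rw [hk _ _ hx hmem, hy hmem, hfgx]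

lemma measurable_coagulationRate {k v : ℝ → ℝ → ℝ} (hk : Measurable (Function.uncurry k))
    (hv : Measurable (Function.uncurry v)) :
    Measurable fun p : ℝ × ℝ => coagulationRate k (fun y => v y p.2) p.1 := by
  have hgain : Measurable fun p : ℝ × ℝ =>
      ∫ y in Ioo 0 p.1, k (p.1 - y) y * v (p.1 - y) p.2 * v y p.2 := by
    simp_rw [← integral_indicator measurableSet_Ioo]
    refine StronglyMeasurable.measurable (StronglyMeasurable.integral_prod_right'
      (f := fun q : (ℝ × ℝ) × ℝ => {q : (ℝ × ℝ) × ℝ | q.2 ∈ Ioo 0 q.1.1}.indicator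
        (fun q => k (q.1.1 - q.2) q.2 * v (q.1.1 - q.2) q.1.2 * v q.2 q.1.2) q) ?_)
    refine Measurable.stronglyMeasurable (Measurable.indicator ?_ ?_)
    · fun_prop
    · exact (measurableSet_lt measurable_const measurable_snd).inter
        (measurableSet_lt measurable_snd (measurable_fst.comp measurable_fst))
  have hloss : Measurable fun p : ℝ × ℝ => ∫ y in Ioi 0, k p.1 y * v p.1 p.2 * v y p.2 :=
    StronglyMeasurable.measurable (StronglyMeasurable.integral_prod_right'
      (f := fun q : (ℝ × ℝ) × ℝ => k q.1.1 q.2 * v q.1.1 q.1.2 * v q.2 q.1.2)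
      (by fun_prop))
  exact (hgain.const_mul _).sub hloss

section IntegralEquation

variable {α : Type*} [MeasurableSpace α] {μ : Measure α} [SFinite μ] {F : α → ℝ → ℝ}
  {M : ℝ≥0∞}

lemma lintegral_setLIntegral_Ioc_enorm_le (hF : Measurable (Function.uncurry F))
    (hFM : ∀ τ, 0 ≤ τ → ∫⁻ x, ‖F x τ‖ₑ ∂μ ≤ M) {a b : ℝ} (ha : 0 ≤ a) :
    ∫⁻ x, (∫⁻ τ in Ioc a b, ‖F x τ‖ₑ) ∂μ ≤ M * ENNReal.ofReal (b - a) := by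
  rw [lintegral_lintegral_swap hF.enorm.aemeasurable, ← Real.volume_Ioc, ← setLIntegral_const]
  exact setLIntegral_mono' measurableSet_Ioc fun τ hτ => hFM τ (ha.trans hτ.1.le)

lemma lintegral_enorm_sub_le_of_eq_add_integral (hF : Measurable (Function.uncurry F))
    (hM : M ≠ ∞) (hFM : ∀ τ, 0 ≤ τ → ∫⁻ x, ‖F x τ‖ₑ ∂μ ≤ M) {u : α → ℝ → ℝ} {c : α → ℝ}
    (hu : ∀ᵐ x ∂μ, ∀ s, 0 ≤ s → u x s = c x + ∫ τ in (0 : ℝ)..s, F x τ)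
    {t t' : ℝ} (ht : 0 ≤ t) (htt' : t ≤ t') :
    ∫⁻ x, ‖u x t' - u x t‖ₑ ∂μ ≤ M * ENNReal.ofReal (t' - t) := by
  have ht' : 0 ≤ t' := ht.trans htt'
  -- Subtracting the two time integrals needs `F x` integrable, which Tonelli gives for a.e. `x`.
  have hint : ∀ᵐ x ∂μ, IntervalIntegrable (F x) volume 0 t' := by
    have hfin : ∫⁻ x, (∫⁻ τ in Ioc 0 t', ‖F x τ‖ₑ) ∂μ ≠ ∞ :=
      ne_top_of_le_ne_top (ENNReal.mul_ne_top hM ENNReal.ofReal_ne_top)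
        (lintegral_setLIntegral_Ioc_enorm_le hF hFM le_rfl)
    filter_upwards [ae_lt_top hF.enorm.lintegral_prod_right' hfin] with x hx
    rw [intervalIntegrable_iff_integrableOn_Ioc_of_le ht']
    exact ⟨(hF.comp measurable_prodMk_left).aestronglyMeasurable, hx⟩
  calc ∫⁻ x, ‖u x t' - u x t‖ₑ ∂μ ≤ ∫⁻ x, (∫⁻ τ in Ioc t t', ‖F x τ‖ₑ) ∂μ := by
        refine lintegral_mono_ae ?_
        filter_upwards [hu, hint] with x hux hx
        rw [hux t' ht', hux t ht, add_sub_add_left_eq_sub,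
          intervalIntegral.integral_interval_sub_left hx
            (hx.mono_set (uIcc_subset_uIcc_left (uIcc_of_le ht' ▸ ⟨ht, htt'⟩))),
          intervalIntegral.integral_of_le htt']
        exact enorm_integral_le_lintegral_enorm _
    _ ≤ M * ENNReal.ofReal (t' - t) := lintegral_setLIntegral_Ioc_enorm_le hF hFM ht

end IntegralEquation

lemma ContinuousOn.measurable_indicator {α β : Type*} [TopologicalSpace α]
    [MeasurableSpace α] [OpensMeasurableSpace α] [TopologicalSpace β] [MeasurableSpace β]
    [BorelSpace β] [Zero β] {f : α → β} {s : Set α} (hf : ContinuousOn f s)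
    (hs : MeasurableSet s) : Measurable (s.indicator f) := by
  classical
  rw [← piecewise_eq_indicator]
  exact hf.measurable_piecewise continuousOn_const hs

-- `K` is only continuous on the open quadrant; extending it by zero makes it measurable.
noncomputable def kernelOnQuadrant (K : ℝ → ℝ → ℝ) (a b : ℝ) : ℝ :=
  (Ioi 0 ×ˢ Ioi 0).indicator (Function.uncurry K) (a, b)

lemma kernelOnQuadrant_of_pos (K : ℝ → ℝ → ℝ) {a b : ℝ} (ha : 0 < a) (hb : 0 < b) :
    kernelOnQuadrant K a b = K a b :=
  indicator_of_mem (mk_mem_prod ha hb) _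

lemma KernelHyp.measurable_kernelOnQuadrant {K : ℝ → ℝ → ℝ} {κ σ lam : ℝ}
    (hK : KernelHyp K κ σ lam) : Measurable (Function.uncurry (kernelOnQuadrant K)) :=
  hK.cont.measurable_indicator (measurableSet_Ioi.prod measurableSet_Ioi)

lemma lintegral_ynormDensity_eq {f : ℝ → ℝ}
    (hf : IntegrableOn (fun x => (x + x⁻¹) * |f x|) (Ioi 0)) :
    ∫⁻ x in Ioi 0, ynormDensity f x = ENNReal.ofReal (Ynorm f) := by
  rw [Ynorm, ofReal_integral_eq_lintegral_ofReal hf]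
  · refine setLIntegral_congr_fun measurableSet_Ioi fun x (hx : 0 < x) => ?_
    rw [ynormDensity, ← ofReal_norm, norm_mul, Real.norm_eq_abs, Real.norm_eq_abs,
      abs_of_pos (by positivity)]
  · filter_upwards [ae_restrict_mem measurableSet_Ioi] with x (hx : 0 < x)
    positivity

section Solutions

variable {K : ℝ → ℝ → ℝ} {u0 : ℝ → ℝ} {u v : ℝ → ℝ → ℝ}

lemma IsSol.exists_measurable_ae_eq (hsol : IsSol K u0 u) :
    ∃ v : ℝ → ℝ → ℝ, Measurable (Function.uncurry v) ∧
      ∀ᵐ x ∂volume.restrict (Ioi 0), ∀ t, 0 ≤ t → v x t = u x t :=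
  exists_measurable_uncurry_ae_eq (fun t ht => (hsol.1 t ht).1.aestronglyMeasurable)
    (hsol.2.mono fun _ hx => hx.2.1)

lemma IsSol.eq_add_integral_coagulationRate (hsol : IsSol K u0 u) {k : ℝ → ℝ → ℝ}
    (hk : ∀ a b, 0 < a → 0 < b → k a b = K a b)
    (hvu : ∀ᵐ x ∂volume.restrict (Ioi 0), ∀ t, 0 ≤ t → v x t = u x t) :
    ∀ᵐ x ∂volume.restrict (Ioi 0), ∀ s, 0 ≤ s →
      u x s = u0 x + ∫ τ in (0 : ℝ)..s, coagulationRate k (fun y => v y τ) x := by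
  filter_upwards [hsol.2, hvu, ae_restrict_mem measurableSet_Ioi] with x hx hvx (hx0 : 0 < x) s hs
  rw [hx.2.2.2 s hs]
  congr 1
  refine intervalIntegral.integral_congr fun τ hτ => ?_
  have hτ0 : 0 ≤ τ := (uIcc_of_le hs ▸ hτ).1
  refine (coagulationRate_eq_intervalIntegral K (fun y => u y τ) hx0.le).symm.trans ?_
  exact coagulationRate_congr (fun a b ha hb => (hk a b ha hb).symm)
    (hvu.mono fun y hy => (hy τ hτ0).symm) hx0 (hvx τ hτ0).symm

lemma IsSol.lintegral_enorm_coagulationRate_le_of_Ynorm_le {σ lam L : ℝ} (hK : KernelHyp K 1 σ lam)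
    (hsol : IsSol K u0 u) (hbound : ∀ t, 0 ≤ t → Ynorm (fun x => u x t) ≤ 2 * L) (hL : 0 ≤ L)
    (hv : Measurable (Function.uncurry v))
    (hvu : ∀ᵐ x ∂volume.restrict (Ioi 0), ∀ t, 0 ≤ t → v x t = u x t) {τ : ℝ} (hτ : 0 ≤ τ) :
    ∫⁻ x in Ioi 0, ‖coagulationRate (kernelOnQuadrant K) (fun y => v y τ) x‖ₑ ≤
      ENNReal.ofReal (18 * powSumConst lam * L ^ 2) := by
  have hk : ∀ a b, 0 < a → 0 < b → |kernelOnQuadrant K a b| ≤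
      3 * 1 * powSumConst lam * ((a + a⁻¹) * (b + b⁻¹)) := fun a b ha hb => by
    rw [kernelOnQuadrant_of_pos K ha hb, abs_of_nonneg (hK.nonneg ha hb)]
    exact hK.le_mul_add_inv ha hb
  have hnorm : ∫⁻ x in Ioi 0, ynormDensity (fun y => v y τ) x ≤ ENNReal.ofReal (2 * L) :=
    calc ∫⁻ x in Ioi 0, ynormDensity (fun y => v y τ) x
        = ∫⁻ x in Ioi 0, ynormDensity (fun y => u y τ) x :=
          lintegral_congr_ae (hvu.mono fun x hx => by rw [ynormDensity, ynormDensity, hx τ hτ])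
      _ = ENNReal.ofReal (Ynorm fun x => u x τ) := lintegral_ynormDensity_eq (hsol.1 τ hτ).2.1
      _ ≤ ENNReal.ofReal (2 * L) := ENNReal.ofReal_le_ofReal (hbound τ hτ)
  calc ∫⁻ x in Ioi 0, ‖coagulationRate (kernelOnQuadrant K) (fun y => v y τ) x‖ₑ
      ≤ (2⁻¹ + 1) * ENNReal.ofReal (3 * 1 * powSumConst lam) *
          (∫⁻ x in Ioi 0, ynormDensity (fun y => v y τ) x) ^ 2 :=
        lintegral_enorm_coagulationRate_le hk (hv.comp measurable_prodMk_right)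
    _ ≤ (2⁻¹ + 1) * ENNReal.ofReal (3 * 1 * powSumConst lam) * ENNReal.ofReal (2 * L) ^ 2 := by
        gcongr
    _ = ENNReal.ofReal (18 * powSumConst lam * L ^ 2) := by
        have hC := (powSumConst_pos lam).le
        have hhalf : (2⁻¹ + 1 : ℝ≥0∞) = ENNReal.ofReal (2⁻¹ + 1) := by
          rw [ENNReal.ofReal_add (by norm_num) zero_le_one, ENNReal.ofReal_inv_of_pos two_pos,
            ENNReal.ofReal_ofNat, ENNReal.ofReal_one]
        rw [hhalf, ← ENNReal.ofReal_pow (by positivity), ← ENNReal.ofReal_mul (by norm_num),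
          ← ENNReal.ofReal_mul (by positivity)]
        ring_nf

end Solutions

theorem L1_time_lipschitz_general
    (K : ℝ → ℝ → ℝ) (σ lam : ℝ) (hK : KernelHyp K 1 σ lam)
    (u0 : ℝ → ℝ)
    (L : ℝ) (hLpos : 0 < L)
    (u : ℝ → ℝ → ℝ) (hsol : IsSol K u0 u)
    (hbound : ∀ t : ℝ, 0 ≤ t → Ynorm (fun x => u x t) ≤ 2 * L)
    (C : ℝ) (hC : C = if lam ≤ 1 then 1 else 2 ^ (2 * lam - 2)) :
    ∀ t t' : ℝ, 0 ≤ t → 0 ≤ t' →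
      (∫ x in Ioi (0:ℝ), |u x t' - u x t|) ≤ 18 * C * L ^ 2 * |t' - t| := by
  intro t t' ht ht'
  wlog htt' : t ≤ t' generalizing t t'
  · rw [abs_sub_comm]
    simpa only [abs_sub_comm (u _ t)] using this t' t ht' ht (le_of_not_ge htt')
  obtain ⟨v, hv, hvu⟩ := hsol.exists_measurable_ae_eq
  have hlip := lintegral_enorm_sub_le_of_eq_add_integral
    (measurable_coagulationRate hK.measurable_kernelOnQuadrant hv) ENNReal.ofReal_ne_top
    (fun τ hτ => hsol.lintegral_enorm_coagulationRate_le_of_Ynorm_le hK hbound hLpos.le hv hvu hτ)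
    (hsol.eq_add_integral_coagulationRate (fun a b => kernelOnQuadrant_of_pos K) hvu) ht htt'
  have hC' : C = powSumConst lam := hC
  subst hC'
  have hC0 := (powSumConst_pos lam).le
  rw [← ENNReal.ofReal_mul (by positivity)] at hlip
  rw [abs_of_nonneg (sub_nonneg.2 htt')]
  have hmeas : AEStronglyMeasurable (fun x => u x t' - u x t) (volume.restrict (Ioi 0)) :=
    ((hsol.1 t' ht').1.sub (hsol.1 t ht).1).aestronglyMeasurable
  simp_rw [← Real.norm_eq_abs]
  rw [integral_norm_eq_lintegral_enorm hmeas]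
  exact ENNReal.toReal_le_of_le_ofReal (by positivity) hlip

/-- `L¹` time-Lipschitz estimate for solutions of the coagulation equation:
`∫_0^∞ |u(x,t') − u(x,t)| dx ≤ 18 C L² |t' − t|`. -/
theorem L1_time_lipschitz
    (K : ℝ → ℝ → ℝ) (σ lam : ℝ) (hK : KernelHyp K 1 σ lam)
    (u0 : ℝ → ℝ) (hu0 : InYplus u0)
    (L : ℝ) (hLpos : 0 < L)
    (u : ℝ → ℝ → ℝ) (hsol : IsSol K u0 u)
    (hbound : ∀ t : ℝ, 0 ≤ t → Ynorm (fun x => u x t) ≤ 2 * L)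
    (C : ℝ) (hC : C = if lam ≤ 1 then 1 else 2 ^ (2 * lam - 2)) :
    ∀ t t' : ℝ, 0 ≤ t → 0 ≤ t' →
      (∫ x in Ioi (0:ℝ), |u x t' - u x t|) ≤ 18 * C * L ^ 2 * |t' - t| :=
  L1_time_lipschitz_general K σ lam hK u0 L hLpos u hsol hbound C hC
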